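/- arXiv:1708.02143 — 15 statements merged into one kernel-verified Lean document; each statement's English description precedes it below -/
import Mathlib

section
/- Over the base system iA₀ (IPC plus the rule: from ⊢ φ→ψ infer ⊢ φ⊰ψ, plus the transitivity axiom Tr: (φ⊰ψ)→(ψ⊰χ)→(φ⊰χ)), the axiom schemes K⊰: (φ⊰ψ)→(φ⊰χ)→(φ⊰(ψ∧χ)) and K'⊰: (φ⊰ψ)→((φ∧χ)⊰(ψ∧χ)) are interderivable: each is derivable from iA₀ extended with the other. -/
/-- Formulas of the language L⊰: IPC connectives plus a binary Lewis arrow `arr` (⊰). -/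
inductive Fm : Type
  | bot  : Fm
  | top  : Fm
  | var  : Nat → Fm
  | and  : Fm → Fm → Fm
  | or   : Fm → Fm → Fm
  | imp  : Fm → Fm → Fm
  | arr  : Fm → Fm → Fm

namespace Fm
/-- Negation ¬φ := φ → ⊥. -/
def neg (φ : Fm) : Fm := φ.imp bot
/-- The box modality □φ := ⊤ ⊰ φ. -/
def box (φ : Fm) : Fm := top.arr φ
end Fm

/-- Hilbert-style provability in iA₀ extended with an extra set `Ax` of axioms:
intuitionistic propositional logic, Modus Ponens, the rule (⊢ φ→ψ ⟹ ⊢ φ⊰ψ),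
and the transitivity axiom Tr : (φ⊰ψ)→(ψ⊰χ)→(φ⊰χ). -/
inductive Prv (Ax : Fm → Prop) : Fm → Prop
  | ax {φ : Fm} : Ax φ → Prv Ax φ
  | mp {φ ψ : Fm} : Prv Ax (φ.imp ψ) → Prv Ax φ → Prv Ax ψ
  | impK (φ ψ : Fm) : Prv Ax (φ.imp (ψ.imp φ))
  | impS (φ ψ χ : Fm) : Prv Ax ((φ.imp (ψ.imp χ)).imp ((φ.imp ψ).imp (φ.imp χ)))
  | andI (φ ψ : Fm) : Prv Ax (φ.imp (ψ.imp (φ.and ψ)))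
  | andE1 (φ ψ : Fm) : Prv Ax ((φ.and ψ).imp φ)
  | andE2 (φ ψ : Fm) : Prv Ax ((φ.and ψ).imp ψ)
  | orI1 (φ ψ : Fm) : Prv Ax (φ.imp (φ.or ψ))
  | orI2 (φ ψ : Fm) : Prv Ax (ψ.imp (φ.or ψ))
  | orE (φ ψ χ : Fm) : Prv Ax ((φ.imp χ).imp ((ψ.imp χ).imp ((φ.or ψ).imp χ)))
  | botE (φ : Fm) : Prv Ax (Fm.bot.imp φ)
  | topI : Prv Ax Fm.top
  | nec {φ ψ : Fm} : Prv Ax (φ.imp ψ) → Prv Ax (φ.arr ψ)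
  | tr (φ ψ χ : Fm) : Prv Ax ((φ.arr ψ).imp ((ψ.arr χ).imp (φ.arr χ)))

/-- The empty set of extra axioms (so `Prv NoAx` is iA₀). -/
def NoAx : Fm → Prop := fun _ => False

/-- K⊰ : (φ⊰ψ)→(φ⊰χ)→(φ⊰(ψ∧χ)). -/
def KAx : Fm → Prop :=
  fun f => ∃ φ ψ χ : Fm, f = (φ.arr ψ).imp ((φ.arr χ).imp (φ.arr (ψ.and χ)))

/-- K'⊰ : (φ⊰ψ)→((φ∧χ)⊰(ψ∧χ)). -/
def KpAx : Fm → Prop :=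
  fun f => ∃ φ ψ χ : Fm, f = (φ.arr ψ).imp ((φ.and χ).arr (ψ.and χ))

/-- K'''⊰ : (φ⊰(ψ→χ))→((φ∧ψ)⊰χ). -/
def KpppAx : Fm → Prop :=
  fun f => ∃ φ ψ χ : Fm, f = (φ.arr (ψ.imp χ)).imp ((φ.and ψ).arr χ)

/-- Di : (φ⊰χ)→(ψ⊰χ)→((φ∨ψ)⊰χ). -/
def DiAx : Fm → Prop :=
  fun f => ∃ φ ψ χ : Fm, f = (φ.arr χ).imp ((ψ.arr χ).imp ((φ.or ψ).arr χ))

/-- Box : (φ⊰ψ)→□(φ→ψ). -/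
def BoxAx : Fm → Prop :=
  fun f => ∃ φ ψ : Fm, f = (φ.arr ψ).imp (Fm.box (φ.imp ψ))

/-- Box' : ((χ∧φ)⊰ψ)→(χ⊰(φ→ψ)). -/
def BoxpAx : Fm → Prop :=
  fun f => ∃ φ ψ χ : Fm, f = ((χ.and φ).arr ψ).imp (χ.arr (φ.imp ψ))

/-- Box'' : (φ⊰ψ)→((χ→φ)⊰(χ→ψ)). -/
def BoxppAx : Fm → Prop :=
  fun f => ∃ φ ψ χ : Fm, f = (φ.arr ψ).imp ((χ.imp φ).arr (χ.imp ψ))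

/-- em : φ∨¬φ. -/
def EmAx : Fm → Prop := fun f => ∃ φ : Fm, f = φ.or φ.neg

/-- S□ : φ→□φ. -/
def SboxAx : Fm → Prop := fun f => ∃ φ : Fm, f = φ.imp (Fm.box φ)

/-- S⊰ : (φ→ψ)→(φ⊰ψ). -/
def SarrAx : Fm → Prop := fun f => ∃ φ ψ : Fm, f = (φ.imp ψ).imp (φ.arr ψ)

/-- S'⊰ : (φ⊰ψ)→(φ→□ψ). -/
def SparrAx : Fm → Prop := fun f => ∃ φ ψ : Fm, f = (φ.arr ψ).imp (φ.imp (Fm.box ψ))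

/-- L⊰ : (□φ→φ)⊰φ. -/
def LarrAx : Fm → Prop := fun f => ∃ φ : Fm, f = ((Fm.box φ).imp φ).arr φ

/-- L□ : □(□φ→φ)→□φ. -/
def LboxAx : Fm → Prop := fun f => ∃ φ : Fm, f = (Fm.box ((Fm.box φ).imp φ)).imp (Fm.box φ)

/-- 4⊰ : φ⊰□φ. -/
def FourAx : Fm → Prop := fun f => ∃ φ : Fm, f = φ.arr (Fm.box φ)

/-- W⊰ : ((φ∧□ψ)⊰ψ)→(φ⊰ψ). -/
def WAx : Fm → Prop := fun f => ∃ φ ψ : Fm, f = ((φ.and (Fm.box ψ)).arr ψ).imp (φ.arr ψ)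

/-- W'⊰ : (φ⊰ψ)→((□ψ→φ)⊰ψ). -/
def WpAx : Fm → Prop := fun f => ∃ φ ψ : Fm, f = (φ.arr ψ).imp (((Fm.box ψ).imp φ).arr ψ)

/-- M⊰ : (φ⊰ψ)→((□χ→φ)⊰(□χ→ψ)). -/
def MAx : Fm → Prop :=
  fun f => ∃ φ ψ χ : Fm, f = (φ.arr ψ).imp (((Fm.box χ).imp φ).arr ((Fm.box χ).imp ψ))

/-- P⊰ : (φ⊰ψ)→□(φ⊰ψ). -/
def PAx : Fm → Prop := fun f => ∃ φ ψ : Fm, f = (φ.arr ψ).imp (Fm.box (φ.arr ψ))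

/-- CB⊰ : (φ⊰ψ)→((φ→ψ)∨φ). -/
def CBAx : Fm → Prop := fun f => ∃ φ ψ : Fm, f = (φ.arr ψ).imp ((φ.imp ψ).or φ)

/-- C4⊰ : □φ⊰φ. -/
def C4Ax : Fm → Prop := fun f => ∃ φ : Fm, f = (Fm.box φ).arr φ

/-- App⊰ : (φ∧(φ⊰ψ))⊰ψ. -/
def AppAx : Fm → Prop := fun f => ∃ φ ψ : Fm, f = (φ.and (φ.arr ψ)).arr ψ

/-- Hug : (φ→□ψ)→(φ⊰ψ). -/
def HugAx : Fm → Prop := fun f => ∃ φ ψ : Fm, f = (φ.imp (Fm.box ψ)).imp (φ.arr ψ)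

/-- Union of two axiom sets. -/
def AxU (A B : Fm → Prop) : Fm → Prop := fun f => A f ∨ B f

section Helpers
variable {Ax : Fm → Prop}

/-- Identity: ⊢ A → A. -/
lemma prv_id (A : Fm) : Prv Ax (A.imp A) :=
  Prv.mp (Prv.mp (Prv.impS A (A.imp A) A) (Prv.impK A (A.imp A))) (Prv.impK A A)

/-- Composition: from ⊢ A→B and ⊢ B→C conclude ⊢ A→C. -/
lemma prv_comp {A B C : Fm} (h1 : Prv Ax (A.imp B)) (h2 : Prv Ax (B.imp C)) :
    Prv Ax (A.imp C) :=
  Prv.mp (Prv.mp (Prv.impS A B C) (Prv.mp (Prv.impK (B.imp C) A) h2)) h1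

/-- Apply to a constant: from ⊢ A→(B→C) and ⊢ B conclude ⊢ A→C. -/
lemma prv_appConst {A B C : Fm} (h : Prv Ax (A.imp (B.imp C))) (hb : Prv Ax B) :
    Prv Ax (A.imp C) :=
  Prv.mp (Prv.mp (Prv.impS A B C) h) (Prv.mp (Prv.impK B A) hb)

/-- Swap: from ⊢ A→(B→C) conclude ⊢ B→(A→C). -/
lemma prv_swap {A B C : Fm} (h : Prv Ax (A.imp (B.imp C))) :
    Prv Ax (B.imp (A.imp C)) :=
  prv_comp (Prv.impK B A) (Prv.mp (Prv.impS A B C) h)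

/-- Compose in second argument: ⊢ A→(B→C), ⊢ D→B gives ⊢ A→(D→C). -/
lemma prv_compR {A B C D : Fm} (h : Prv Ax (A.imp (B.imp C))) (g : Prv Ax (D.imp B)) :
    Prv Ax (A.imp (D.imp C)) :=
  prv_swap (prv_comp g (prv_swap h))

/-- ⊢ A → A∧A. -/
lemma prv_dup (A : Fm) : Prv Ax (A.imp (A.and A)) :=
  Prv.mp (Prv.mp (Prv.impS A A (A.and A)) (Prv.andI A A)) (prv_id A)

/-- ⊢ A∧B → B∧A. -/
lemma prv_comm (A B : Fm) : Prv Ax ((A.and B).imp (B.and A)) :=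
  Prv.mp (Prv.mp (Prv.impS (A.and B) A (B.and A))
    (prv_comp (Prv.andE2 A B) (Prv.andI B A))) (Prv.andE1 A B)

end Helpers

/-- Over iA₀, K⊰ and K'⊰ are interderivable. -/
theorem stmt0 :
    (∀ φ ψ χ : Fm, Prv KpAx ((φ.arr ψ).imp ((φ.arr χ).imp (φ.arr (ψ.and χ))))) ∧
    (∀ φ ψ χ : Fm, Prv KAx ((φ.arr ψ).imp ((φ.and χ).arr (ψ.and χ)))) := by
  constructor
  · -- K⊰ from K'⊰
    intro φ ψ χ
    -- h1 : (φ⊰ψ) → (φ ⊰ ψ∧φ)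
    have a1 : Prv KpAx ((φ.arr ψ).imp ((φ.and φ).arr (ψ.and φ))) :=
      Prv.ax ⟨φ, ψ, φ, rfl⟩
    have t1 : Prv KpAx (φ.arr (φ.and φ)) := Prv.nec (prv_dup φ)
    have h1 : Prv KpAx ((φ.arr ψ).imp (φ.arr (ψ.and φ))) :=
      prv_comp a1 (Prv.mp (Prv.tr φ (φ.and φ) (ψ.and φ)) t1)
    -- g : (φ⊰χ) → ((ψ∧φ) ⊰ (ψ∧χ))
    have a2 : Prv KpAx ((φ.arr χ).imp ((φ.and ψ).arr (χ.and ψ))) :=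
      Prv.ax ⟨φ, χ, ψ, rfl⟩
    have tpre : Prv KpAx ((ψ.and φ).arr (φ.and ψ)) := Prv.nec (prv_comm ψ φ)
    have step1 : Prv KpAx ((φ.arr χ).imp ((ψ.and φ).arr (χ.and ψ))) :=
      prv_comp a2 (Prv.mp (Prv.tr (ψ.and φ) (φ.and ψ) (χ.and ψ)) tpre)
    have post : Prv KpAx ((χ.and ψ).arr (ψ.and χ)) := Prv.nec (prv_comm χ ψ)
    have g : Prv KpAx ((φ.arr χ).imp ((ψ.and φ).arr (ψ.and χ))) :=
      prv_comp step1 (prv_appConst (Prv.tr (ψ.and φ) (χ.and ψ) (ψ.and χ)) post)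
    -- chain: (φ⊰ψ) → ((ψ∧φ)⊰(ψ∧χ)) → (φ⊰(ψ∧χ))
    have chain : Prv KpAx ((φ.arr ψ).imp (((ψ.and φ).arr (ψ.and χ)).imp (φ.arr (ψ.and χ)))) :=
      prv_comp h1 (Prv.tr φ (ψ.and φ) (ψ.and χ))
    exact prv_compR chain g
  · -- K'⊰ from K⊰
    intro φ ψ χ
    have f : Prv KAx ((φ.arr ψ).imp ((φ.and χ).arr ψ)) :=
      Prv.mp (Prv.tr (φ.and χ) φ ψ) (Prv.nec (Prv.andE1 φ χ))
    have k : Prv KAx (((φ.and χ).arr ψ).imp (((φ.and χ).arr χ).imp ((φ.and χ).arr (ψ.and χ)))) :=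
      Prv.ax ⟨φ.and χ, ψ, χ, rfl⟩
    exact prv_appConst (prv_comp f k) (Prv.nec (Prv.andE2 φ χ))
end

section
/- Over iA₀, the axiom K⊰: (φ⊰ψ)→(φ⊰χ)→(φ⊰(ψ∧χ)) and the axiom K'''⊰: (φ⊰(ψ→χ))→((φ∧ψ)⊰χ) are interderivable. -/
namespace PrvTools

variable {Ax : Fm → Prop}

lemma id1 (φ : Fm) : Prv Ax (φ.imp φ) :=
  Prv.mp (Prv.mp (Prv.impS φ (φ.imp φ) φ) (Prv.impK φ (φ.imp φ))) (Prv.impK φ φ)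

lemma constI {A B : Fm} (h : Prv Ax B) : Prv Ax (A.imp B) :=
  Prv.mp (Prv.impK B A) h

lemma mpD {A B C : Fm} (h1 : Prv Ax (A.imp (B.imp C))) (h2 : Prv Ax (A.imp B)) :
    Prv Ax (A.imp C) :=
  Prv.mp (Prv.mp (Prv.impS A B C) h1) h2

lemma compose {A B C : Fm} (h1 : Prv Ax (A.imp B)) (h2 : Prv Ax (B.imp C)) :
    Prv Ax (A.imp C) :=
  mpD (constI h2) h1

lemma mpD2 {A P Q R : Fm} (h1 : Prv Ax (A.imp (P.imp (Q.imp R))))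
    (h2 : Prv Ax (A.imp (P.imp Q))) : Prv Ax (A.imp (P.imp R)) :=
  mpD (compose h1 (Prv.impS P Q R)) h2

lemma flipI {P Q R : Fm} (h : Prv Ax (P.imp (Q.imp R))) : Prv Ax (Q.imp (P.imp R)) :=
  mpD2 (constI h) (Prv.impK Q P)

lemma composeD {A P Q R : Fm} (h1 : Prv Ax (A.imp (P.imp Q)))
    (h2 : Prv Ax (A.imp (Q.imp R))) : Prv Ax (A.imp (P.imp R)) :=
  mpD2 (compose h2 (Prv.impK (Q.imp R) P)) h1

end PrvTools

open PrvTools in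
/-- Over iA₀, K⊰ and K'''⊰ are interderivable. -/
theorem stmt1 :
    (∀ φ ψ χ : Fm, Prv KpppAx ((φ.arr ψ).imp ((φ.arr χ).imp (φ.arr (ψ.and χ))))) ∧
    (∀ φ ψ χ : Fm, Prv KAx ((φ.arr (ψ.imp χ)).imp ((φ.and ψ).arr χ))) := by
  constructor
  · intro φ ψ χ
    -- A = φ⊰ψ, B = φ⊰χ, goal φ⊰(ψ∧χ)
    -- h1 : B → φ⊰(φ∧χ)
    have b1' : Prv KpppAx ((φ.arr χ).imp (φ.arr (φ.imp (φ.and χ)))) :=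
      mpD (Prv.tr φ χ (φ.imp (φ.and χ)))
        (constI (Prv.nec (flipI (Prv.andI φ χ))))
    have kppp1 : Prv KpppAx ((φ.arr (φ.imp (φ.and χ))).imp ((φ.and φ).arr (φ.and χ))) :=
      Prv.ax ⟨φ, φ, φ.and χ, rfl⟩
    have b2 : Prv KpppAx ((φ.arr χ).imp ((φ.and φ).arr (φ.and χ))) := compose b1' kppp1
    have diag : Prv KpppAx (φ.arr (φ.and φ)) :=
      Prv.nec (mpD (Prv.andI φ φ) (id1 φ))
    have b3 : Prv KpppAx (((φ.and φ).arr (φ.and χ)).imp (φ.arr (φ.and χ))) :=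
      Prv.mp (Prv.tr φ (φ.and φ) (φ.and χ)) diag
    have h1 : Prv KpppAx ((φ.arr χ).imp (φ.arr (φ.and χ))) := compose b2 b3
    -- h2 : A → (φ∧χ)⊰(ψ∧χ)
    have a1 : Prv KpppAx ((φ.arr ψ).imp (φ.arr (χ.imp (ψ.and χ)))) :=
      mpD (Prv.tr φ ψ (χ.imp (ψ.and χ))) (constI (Prv.nec (Prv.andI ψ χ)))
    have kppp2 : Prv KpppAx ((φ.arr (χ.imp (ψ.and χ))).imp ((φ.and χ).arr (ψ.and χ))) :=
      Prv.ax ⟨φ, χ, ψ.and χ, rfl⟩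
    have h2 : Prv KpppAx ((φ.arr ψ).imp ((φ.and χ).arr (ψ.and χ))) := compose a1 kppp2
    -- combine via tr φ (φ∧χ) (ψ∧χ)
    have trI := Prv.tr (Ax := KpppAx) φ (φ.and χ) (ψ.and χ)
    have step : Prv KpppAx ((φ.arr ψ).imp
        ((φ.arr (φ.and χ)).imp (φ.arr (ψ.and χ)))) :=
      compose h2 (flipI trI)
    exact composeD (constI h1) step
  · intro φ ψ χ
    -- A = φ⊰(ψ→χ), goal (φ∧ψ)⊰χ
    have g1 : Prv KAx ((φ.arr (ψ.imp χ)).imp ((φ.and ψ).arr (ψ.imp χ))) :=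
      Prv.mp (Prv.tr (φ.and ψ) φ (ψ.imp χ)) (Prv.nec (Prv.andE1 φ ψ))
    have kax : Prv KAx (((φ.and ψ).arr (ψ.imp χ)).imp
        (((φ.and ψ).arr ψ).imp ((φ.and ψ).arr ((ψ.imp χ).and ψ)))) :=
      Prv.ax ⟨φ.and ψ, ψ.imp χ, ψ, rfl⟩
    have g2 := compose g1 kax
    have g3 : Prv KAx ((φ.arr (ψ.imp χ)).imp ((φ.and ψ).arr ((ψ.imp χ).and ψ))) :=
      mpD g2 (constI (Prv.nec (Prv.andE2 φ ψ)))
    have pf : Prv KAx (((ψ.imp χ).and ψ).imp χ) :=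
      mpD (Prv.andE1 (ψ.imp χ) ψ) (Prv.andE2 (ψ.imp χ) ψ)
    have g4 := compose g3 (Prv.tr (φ.and ψ) ((ψ.imp χ).and ψ) χ)
    exact mpD g4 (constI (Prv.nec pf))
end

section
/- In the system iA (which is iA⁻ = iA₀ + K⊰ together with the disjunction axiom Di: (φ⊰χ)→(ψ⊰χ)→((φ∨ψ)⊰χ)), the formula ψ⊰χ is provably equivalent to (ψ∨¬ψ)⊰(ψ→χ); i.e., iA proves (ψ⊰χ) → ((ψ∨¬ψ)⊰(ψ→χ)) and its converse. -/
namespace Prv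
variable {Ax : Fm → Prop}

lemma sApp {φ ψ χ : Fm} (h1 : Prv Ax (φ.imp (ψ.imp χ))) (h2 : Prv Ax (φ.imp ψ)) :
    Prv Ax (φ.imp χ) := mp (mp (impS φ ψ χ) h1) h2

lemma id' (φ : Fm) : Prv Ax (φ.imp φ) :=
  sApp (impK φ (φ.imp φ)) (impK φ φ)

lemma const (φ : Fm) {ψ : Fm} (h : Prv Ax ψ) : Prv Ax (φ.imp ψ) :=
  mp (impK ψ φ) h

lemma comp {φ ψ χ : Fm} (h1 : Prv Ax (φ.imp ψ)) (h2 : Prv Ax (ψ.imp χ)) :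
    Prv Ax (φ.imp χ) := sApp (const φ h2) h1

lemma swapArg {φ ψ χ : Fm} (h1 : Prv Ax (φ.imp (ψ.imp χ))) (h2 : Prv Ax ψ) :
    Prv Ax (φ.imp χ) := sApp h1 (const φ h2)

lemma sApp2 {H A B C : Fm} (h1 : Prv Ax (H.imp (A.imp (B.imp C))))
    (h2 : Prv Ax (H.imp (A.imp B))) : Prv Ax (H.imp (A.imp C)) :=
  sApp (comp h1 (impS A B C)) h2

end Prv

/-- In iA = iA₀ + K⊰ + Di, the formula ψ⊰χ is provably equivalent to (ψ∨¬ψ)⊰(ψ→χ). -/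
theorem stmt3 :
    (∀ ψ χ : Fm, Prv (AxU KAx DiAx) ((ψ.arr χ).imp ((ψ.or ψ.neg).arr (ψ.imp χ)))) ∧
    (∀ ψ χ : Fm, Prv (AxU KAx DiAx) (((ψ.or ψ.neg).arr (ψ.imp χ)).imp (ψ.arr χ))) := by
  constructor
  · intro ψ χ
    -- f1 : (ψ⊰χ) → (ψ⊰(ψ→χ))
    have f1 : Prv (AxU KAx DiAx) ((ψ.arr χ).imp (ψ.arr (ψ.imp χ))) :=
      Prv.swapArg (Prv.tr ψ χ (ψ.imp χ)) (Prv.nec (Prv.impK χ ψ))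
    -- ⊢ ¬ψ → (ψ → χ)
    have negimp : Prv (AxU KAx DiAx) (ψ.neg.imp (ψ.imp χ)) :=
      Prv.sApp2 (Prv.const _ (Prv.const ψ (Prv.botE χ))) (Prv.id' ψ.neg)
    have b : Prv (AxU KAx DiAx) (ψ.neg.arr (ψ.imp χ)) := Prv.nec negimp
    have di : Prv (AxU KAx DiAx)
        ((ψ.arr (ψ.imp χ)).imp ((ψ.neg.arr (ψ.imp χ)).imp ((ψ.or ψ.neg).arr (ψ.imp χ)))) :=
      Prv.ax (Or.inr ⟨ψ, ψ.neg, ψ.imp χ, rfl⟩)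
    exact Prv.comp f1 (Prv.swapArg di b)
  · intro ψ χ
    have h1 : Prv (AxU KAx DiAx) (((ψ.or ψ.neg).arr (ψ.imp χ)).imp (ψ.arr (ψ.imp χ))) :=
      Prv.mp (Prv.tr ψ (ψ.or ψ.neg) (ψ.imp χ)) (Prv.nec (Prv.orI1 ψ ψ.neg))
    have kInst : Prv (AxU KAx DiAx)
        ((ψ.arr ψ).imp ((ψ.arr (ψ.imp χ)).imp (ψ.arr (ψ.and (ψ.imp χ))))) :=
      Prv.ax (Or.inl ⟨ψ, ψ, ψ.imp χ, rfl⟩)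
    have h2 : Prv (AxU KAx DiAx)
        (((ψ.or ψ.neg).arr (ψ.imp χ)).imp (ψ.arr (ψ.and (ψ.imp χ)))) :=
      Prv.comp h1 (Prv.mp kInst (Prv.nec (Prv.id' ψ)))
    have appLem : Prv (AxU KAx DiAx) ((ψ.and (ψ.imp χ)).imp χ) :=
      Prv.sApp (Prv.andE2 ψ (ψ.imp χ)) (Prv.andE1 ψ (ψ.imp χ))
    exact Prv.comp h2 (Prv.swapArg (Prv.tr ψ (ψ.and (ψ.imp χ)) χ) (Prv.nec appLem))
end

section
/- Adding the law of excluded middle em: φ∨¬φ to the system iA makes the axiom Box: (φ⊰ψ)→□(φ→ψ) derivable, where □χ abbreviates ⊤⊰χ. That is, classically the Lewis arrow collapses to the boxed implication. -/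
namespace PrvHelp

variable {Ax : Fm → Prop}

/-- Composition: from A→B and B→C derive A→C. -/
theorem comp {A B C : Fm} (h1 : Prv Ax (A.imp B)) (h2 : Prv Ax (B.imp C)) :
    Prv Ax (A.imp C) :=
  Prv.mp (Prv.mp (Prv.impS A B C) (Prv.mp (Prv.impK (B.imp C) A) h2)) h1

/-- From X→(Y→Z) and ⊢Y derive X→Z. -/
theorem swapArg {X Y Z : Fm} (h1 : Prv Ax (X.imp (Y.imp Z))) (h2 : Prv Ax Y) :
    Prv Ax (X.imp Z) :=
  Prv.mp (Prv.mp (Prv.impS X Y Z) h1) (Prv.mp (Prv.impK Y X) h2)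

end PrvHelp

/-- iA + em derives Box : (φ⊰ψ)→□(φ→ψ). -/
theorem stmt4 :
    ∀ φ ψ : Fm, Prv (AxU (AxU KAx DiAx) EmAx) ((φ.arr ψ).imp (Fm.box (φ.imp ψ))) := by
  intro φ ψ
  set Ax := AxU (AxU KAx DiAx) EmAx
  -- em : φ ∨ ¬φ
  have em : Prv Ax (φ.or φ.neg) := Prv.ax (Or.inr ⟨φ, rfl⟩)
  -- ⊢ ψ ⊰ (φ→ψ)
  have h1 : Prv Ax (ψ.arr (φ.imp ψ)) := Prv.nec (Prv.impK ψ φ)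
  -- (φ⊰ψ) → (φ⊰(φ→ψ))
  have h2 : Prv Ax ((φ.arr ψ).imp (φ.arr (φ.imp ψ))) :=
    PrvHelp.swapArg (Prv.tr φ ψ (φ.imp ψ)) h1
  -- ⊢ ¬φ ⊰ (φ→ψ) ; ¬φ → (φ → ψ) from ¬φ = φ→⊥ and ⊥→ψ
  have hbot : Prv Ax (φ.neg.imp (φ.imp ψ)) := by
    have : Prv Ax ((φ.imp Fm.bot).imp (φ.imp ψ)) :=
      Prv.mp (Prv.impS φ Fm.bot ψ)
        (Prv.mp (Prv.impK (Fm.bot.imp ψ) φ) (Prv.botE ψ))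
    exact this
  have h3 : Prv Ax (φ.neg.arr (φ.imp ψ)) := Prv.nec hbot
  -- Di : (φ⊰(φ→ψ)) → ((¬φ⊰(φ→ψ)) → ((φ∨¬φ)⊰(φ→ψ)))
  have di : Prv Ax ((φ.arr (φ.imp ψ)).imp ((φ.neg.arr (φ.imp ψ)).imp
      ((φ.or φ.neg).arr (φ.imp ψ)))) :=
    Prv.ax (Or.inl (Or.inr ⟨φ, φ.neg, φ.imp ψ, rfl⟩))
  have h4 : Prv Ax ((φ.arr (φ.imp ψ)).imp ((φ.or φ.neg).arr (φ.imp ψ))) :=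
    PrvHelp.swapArg di h3
  -- ⊤ ⊰ (φ∨¬φ)
  have h5 : Prv Ax (Fm.top.arr (φ.or φ.neg)) :=
    Prv.nec (Prv.mp (Prv.impK (φ.or φ.neg) Fm.top) em)
  -- ((φ∨¬φ)⊰(φ→ψ)) → (⊤⊰(φ→ψ))
  have h6 : Prv Ax (((φ.or φ.neg).arr (φ.imp ψ)).imp (Fm.top.arr (φ.imp ψ))) :=
    Prv.mp (Prv.tr Fm.top (φ.or φ.neg) (φ.imp ψ)) h5
  exact PrvHelp.comp h2 (PrvHelp.comp h4 h6)
end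

section
/- Over iA⁻, the axiom Box: (φ⊰ψ)→□(φ→ψ) and the axiom Box': ((χ∧φ)⊰ψ)→(χ⊰(φ→ψ)) are interderivable. -/
namespace PrvAux
variable {Ax : Fm → Prop}

theorem pid (φ : Fm) : Prv Ax (φ.imp φ) :=
  Prv.mp (Prv.mp (Prv.impS φ (φ.imp φ) φ) (Prv.impK φ (φ.imp φ))) (Prv.impK φ φ)

theorem wk {ψ : Fm} (φ : Fm) (h : Prv Ax ψ) : Prv Ax (φ.imp ψ) :=
  Prv.mp (Prv.impK ψ φ) h

theorem comp {φ ψ χ : Fm} (h1 : Prv Ax (φ.imp ψ)) (h2 : Prv Ax (ψ.imp χ)) :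
    Prv Ax (φ.imp χ) :=
  Prv.mp (Prv.mp (Prv.impS φ ψ χ) (wk φ h2)) h1

theorem ap {φ ψ χ : Fm} (h1 : Prv Ax (φ.imp (ψ.imp χ))) (h2 : Prv Ax (φ.imp ψ)) :
    Prv Ax (φ.imp χ) :=
  Prv.mp (Prv.mp (Prv.impS φ ψ χ) h1) h2

theorem mp_under {φ ψ χ : Fm} (h1 : Prv Ax (φ.imp (ψ.imp χ))) (h2 : Prv Ax ψ) :
    Prv Ax (φ.imp χ) :=
  ap h1 (wk φ h2)

theorem ap2 {δ φ ψ χ : Fm} (h1 : Prv Ax (δ.imp (φ.imp (ψ.imp χ))))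
    (h2 : Prv Ax (δ.imp (φ.imp ψ))) : Prv Ax (δ.imp (φ.imp χ)) :=
  ap (comp h1 (Prv.impS φ ψ χ)) h2

/-- (((χ∧φ)→ψ)∧χ) → (φ→ψ) -/
theorem key (φ ψ χ : Fm) :
    Prv Ax ((((χ.and φ).imp ψ).and χ).imp (φ.imp ψ)) := by
  set θ := (χ.and φ).imp ψ
  have h1 : Prv Ax ((θ.and χ).imp θ) := Prv.andE1 _ _
  have h2 : Prv Ax ((θ.and χ).imp χ) := Prv.andE2 _ _
  have h4 : Prv Ax ((θ.and χ).imp (φ.imp (χ.and φ))) := comp h2 (Prv.andI χ φ)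
  have h5 : Prv Ax ((θ.and χ).imp (φ.imp θ)) := comp h1 (Prv.impK θ φ)
  exact ap2 h5 h4

end PrvAux

/-- Over iA⁻, Box and Box' are interderivable. -/
theorem stmt5 :
    (∀ φ ψ : Fm, Prv (AxU KAx BoxpAx) ((φ.arr ψ).imp (Fm.box (φ.imp ψ)))) ∧
    (∀ φ ψ χ : Fm, Prv (AxU KAx BoxAx) (((χ.and φ).arr ψ).imp (χ.arr (φ.imp ψ)))) := by
  constructor
  · intro φ ψ
    have t1 : Prv (AxU KAx BoxpAx) ((Fm.top.and φ).arr φ) := Prv.nec (Prv.andE2 _ _)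
    have t3 : Prv (AxU KAx BoxpAx) ((φ.arr ψ).imp ((Fm.top.and φ).arr ψ)) :=
      Prv.mp (Prv.tr (Fm.top.and φ) φ ψ) t1
    have t4 : Prv (AxU KAx BoxpAx) (((Fm.top.and φ).arr ψ).imp (Fm.top.arr (φ.imp ψ))) :=
      Prv.ax (Or.inr ⟨φ, ψ, Fm.top, rfl⟩)
    exact PrvAux.comp t3 t4
  · intro φ ψ χ
    set θ := (χ.and φ).imp ψ with hθ
    have s1 : Prv (AxU KAx BoxAx) (((χ.and φ).arr ψ).imp (Fm.top.arr θ)) :=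
      Prv.ax (Or.inr ⟨χ.and φ, ψ, rfl⟩)
    have s2 : Prv (AxU KAx BoxAx) (χ.arr Fm.top) :=
      Prv.nec (PrvAux.wk χ Prv.topI)
    have s3 : Prv (AxU KAx BoxAx) ((Fm.top.arr θ).imp (χ.arr θ)) :=
      Prv.mp (Prv.tr χ Fm.top θ) s2
    have s4 : Prv (AxU KAx BoxAx) (((χ.and φ).arr ψ).imp (χ.arr θ)) := PrvAux.comp s1 s3
    have s5 : Prv (AxU KAx BoxAx) (χ.arr χ) := Prv.nec (PrvAux.pid χ)
    have s6 : Prv (AxU KAx BoxAx) ((χ.arr θ).imp ((χ.arr χ).imp (χ.arr (θ.and χ)))) :=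
      Prv.ax (Or.inl ⟨χ, θ, χ, rfl⟩)
    have s7 : Prv (AxU KAx BoxAx) (((χ.and φ).arr ψ).imp (χ.arr (θ.and χ))) :=
      PrvAux.mp_under (PrvAux.comp s4 s6) s5
    have s8 : Prv (AxU KAx BoxAx) ((θ.and χ).arr (φ.imp ψ)) :=
      Prv.nec (PrvAux.key φ ψ χ)
    exact PrvAux.mp_under
      (PrvAux.comp s7 (Prv.tr χ (θ.and χ) (φ.imp ψ))) s8
end

section
/- Over iA⁻, the strength axioms S□: φ→□φ, S⊰: (φ→ψ)→(φ⊰ψ), and S'⊰: (φ⊰ψ)→(φ→□ψ) all axiomatize the same logic: each of the three schemes is derivable from iA⁻ plus any of the others. -/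
namespace Prv

variable {Ax : Fm → Prop} {A B C : Fm}

theorem imp_ap (h1 : Prv Ax (A.imp (B.imp C))) (h2 : Prv Ax (A.imp B)) :
    Prv Ax (A.imp C) :=
  Prv.mp (Prv.mp (Prv.impS A B C) h1) h2

theorem comp_s8 (h1 : Prv Ax (A.imp B)) (h2 : Prv Ax (B.imp C)) : Prv Ax (A.imp C) :=
  imp_ap (Prv.mp (Prv.impK (B.imp C) A) h2) h1

theorem imp_id : Prv Ax (A.imp A) :=
  imp_ap (Prv.impK A (A.imp A)) (Prv.impK A A)

theorem mpr (h1 : Prv Ax (A.imp (B.imp C))) (hb : Prv Ax B) : Prv Ax (A.imp C) :=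
  imp_ap h1 (Prv.mp (Prv.impK B A) hb)

theorem flip (h : Prv Ax (A.imp (B.imp C))) : Prv Ax (B.imp (A.imp C)) :=
  imp_ap (comp_s8 (Prv.mp (Prv.impK (A.imp (B.imp C)) B) h) (Prv.impS A B C))
    (Prv.impK B A)

theorem imp_top : Prv Ax (A.imp Fm.top) :=
  Prv.mp (Prv.impK Fm.top A) Prv.topI

theorem arr_top : Prv Ax (A.arr Fm.top) := Prv.nec imp_top

/-- ⊢ □χ → (A ⊰ χ). -/
theorem box_to_arr : Prv Ax ((Fm.box C).imp (A.arr C)) :=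
  Prv.mp (Prv.tr A Fm.top C) arr_top

theorem sarr_of_sbox
    (hK : ∀ φ ψ χ : Fm, Prv Ax ((φ.arr ψ).imp ((φ.arr χ).imp (φ.arr (ψ.and χ)))))
    (hS : ∀ φ : Fm, Prv Ax (φ.imp (Fm.box φ))) (φ ψ : Fm) :
    Prv Ax ((φ.imp ψ).imp (φ.arr ψ)) := by
  have hb : Prv Ax ((Fm.box (φ.imp ψ)).imp (φ.arr (φ.imp ψ))) := box_to_arr
  have hk : Prv Ax ((φ.arr (φ.imp ψ)).imp (φ.arr (φ.and (φ.imp ψ)))) :=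
    Prv.mp (hK φ φ (φ.imp ψ)) (Prv.nec imp_id)
  have hmp : Prv Ax ((φ.and (φ.imp ψ)).imp ψ) :=
    imp_ap (Prv.andE2 φ (φ.imp ψ)) (Prv.andE1 φ (φ.imp ψ))
  have htr : Prv Ax ((φ.arr (φ.and (φ.imp ψ))).imp (φ.arr ψ)) :=
    mpr (Prv.tr φ (φ.and (φ.imp ψ)) ψ) (Prv.nec hmp)
  exact comp_s8 (hS (φ.imp ψ)) (comp_s8 hb (comp_s8 hk htr))

theorem sparr_of_sbox (hS : ∀ φ : Fm, Prv Ax (φ.imp (Fm.box φ))) (φ ψ : Fm) :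
    Prv Ax ((φ.arr ψ).imp (φ.imp (Fm.box ψ))) :=
  flip (comp_s8 (hS φ) (Prv.tr Fm.top φ ψ))

theorem sbox_of_sarr
    (hS : ∀ φ ψ : Fm, Prv Ax ((φ.imp ψ).imp (φ.arr ψ))) (φ : Fm) :
    Prv Ax (φ.imp (Fm.box φ)) :=
  comp_s8 (Prv.impK φ Fm.top) (hS Fm.top φ)

theorem sbox_of_sparr
    (hS : ∀ φ ψ : Fm, Prv Ax ((φ.arr ψ).imp (φ.imp (Fm.box ψ)))) (φ : Fm) :
    Prv Ax (φ.imp (Fm.box φ)) :=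
  Prv.mp (hS φ φ) (Prv.nec imp_id)

end Prv

/-- Over iA⁻, the strength axioms S□, S⊰ and S'⊰ each derive the others. -/
theorem stmt8 :
    ((∀ φ ψ : Fm, Prv (AxU KAx SboxAx) ((φ.imp ψ).imp (φ.arr ψ))) ∧
     (∀ φ ψ : Fm, Prv (AxU KAx SboxAx) ((φ.arr ψ).imp (φ.imp (Fm.box ψ))))) ∧
    ((∀ φ : Fm, Prv (AxU KAx SarrAx) (φ.imp (Fm.box φ))) ∧
     (∀ φ ψ : Fm, Prv (AxU KAx SarrAx) ((φ.arr ψ).imp (φ.imp (Fm.box ψ))))) ∧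
    ((∀ φ : Fm, Prv (AxU KAx SparrAx) (φ.imp (Fm.box φ))) ∧
     (∀ φ ψ : Fm, Prv (AxU KAx SparrAx) ((φ.imp ψ).imp (φ.arr ψ)))) := by
  refine ⟨⟨?_, ?_⟩, ⟨?_, ?_⟩, ⟨?_, ?_⟩⟩
  · exact Prv.sarr_of_sbox (fun φ ψ χ => Prv.ax (Or.inl ⟨φ, ψ, χ, rfl⟩))
      (fun φ => Prv.ax (Or.inr ⟨φ, rfl⟩))
  · exact Prv.sparr_of_sbox (fun φ => Prv.ax (Or.inr ⟨φ, rfl⟩))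
  · exact Prv.sbox_of_sarr (fun φ ψ => Prv.ax (Or.inr ⟨φ, ψ, rfl⟩))
  · exact Prv.sparr_of_sbox
      (Prv.sbox_of_sarr (fun φ ψ => Prv.ax (Or.inr ⟨φ, ψ, rfl⟩)))
  · exact Prv.sbox_of_sparr (fun φ ψ => Prv.ax (Or.inr ⟨φ, ψ, rfl⟩))
  · exact Prv.sarr_of_sbox (fun φ ψ χ => Prv.ax (Or.inl ⟨φ, ψ, χ, rfl⟩))
      (Prv.sbox_of_sparr (fun φ ψ => Prv.ax (Or.inr ⟨φ, ψ, rfl⟩)))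
end

section
/- The system iA⁻ extended with the Löb axiom L⊰: (□φ→φ)⊰φ derives the axiom 4⊰: φ⊰□φ; conversely, iA⁻ plus L□: □(□φ→φ)→□φ and 4⊰ derives L⊰. Hence iA⁻ + L⊰ and iA⁻ + L□ + 4⊰ axiomatize the same logic. -/
section Aux

variable {Ax : Fm → Prop}

theorem pId (φ : Fm) : Prv Ax (φ.imp φ) :=
  Prv.mp (Prv.mp (Prv.impS φ (φ.imp φ) φ) (Prv.impK φ (φ.imp φ))) (Prv.impK φ φ)

/-- From ⊢ φ→(ψ→χ) and ⊢ ψ, infer ⊢ φ→χ. -/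
theorem pMp2 {φ ψ χ : Fm} (h1 : Prv Ax (φ.imp (ψ.imp χ))) (h2 : Prv Ax ψ) :
    Prv Ax (φ.imp χ) :=
  Prv.mp (Prv.mp (Prv.impS φ ψ χ) h1) (Prv.mp (Prv.impK ψ φ) h2)

/-- From ⊢ φ→ψ and ⊢ ψ→χ, infer ⊢ φ→χ. -/
theorem pTrans {φ ψ χ : Fm} (h1 : Prv Ax (φ.imp ψ)) (h2 : Prv Ax (ψ.imp χ)) :
    Prv Ax (φ.imp χ) :=
  Prv.mp (Prv.mp (Prv.impS φ ψ χ) (Prv.mp (Prv.impK (ψ.imp χ) φ) h2)) h1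

/-- The B combinator: ⊢ (ψ→χ)→((φ→ψ)→(φ→χ)). -/
theorem pComp (φ ψ χ : Fm) :
    Prv Ax ((ψ.imp χ).imp ((φ.imp ψ).imp (φ.imp χ))) :=
  Prv.mp
    (Prv.mp (Prv.impS (ψ.imp χ) (φ.imp (ψ.imp χ)) ((φ.imp ψ).imp (φ.imp χ)))
      (Prv.mp
        (Prv.impK ((φ.imp (ψ.imp χ)).imp ((φ.imp ψ).imp (φ.imp χ))) (ψ.imp χ))
        (Prv.impS φ ψ χ)))
    (Prv.impK (ψ.imp χ) φ)

/-- From ⊢ φ→(ψ→χ), infer ⊢ ψ→(φ→χ). -/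
theorem pFlip {φ ψ χ : Fm} (h : Prv Ax (φ.imp (ψ.imp χ))) :
    Prv Ax (ψ.imp (φ.imp χ)) :=
  Prv.mp
    (Prv.mp (Prv.impS ψ (φ.imp ψ) (φ.imp χ))
      (pTrans (Prv.mp (Prv.impK (φ.imp (ψ.imp χ)) ψ) h) (Prv.impS φ ψ χ)))
    (Prv.impK ψ φ)

theorem arrTrans {φ ψ χ : Fm} (h1 : Prv Ax (φ.arr ψ)) (h2 : Prv Ax (ψ.arr χ)) :
    Prv Ax (φ.arr χ) :=
  Prv.mp (Prv.mp (Prv.tr φ ψ χ) h1) h2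

theorem arrMonoR {φ ψ χ : Fm} (h1 : Prv Ax (ψ.imp χ)) (h2 : Prv Ax (φ.arr ψ)) :
    Prv Ax (φ.arr χ) :=
  arrTrans h2 (Prv.nec h1)

/-- Admissibility: if every axiom of `Ax'` is provable from `Ax`, then provability
from `Ax'` implies provability from `Ax`. -/
theorem prv_mono {Ax' : Fm → Prop} (h : ∀ f, Ax' f → Prv Ax f) {g : Fm}
    (hg : Prv Ax' g) : Prv Ax g := by
  induction hg with
  | ax ha => exact h _ ha
  | mp _ _ ih1 ih2 => exact Prv.mp ih1 ih2
  | impK φ ψ => exact Prv.impK φ ψ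
  | impS φ ψ χ => exact Prv.impS φ ψ χ
  | andI φ ψ => exact Prv.andI φ ψ
  | andE1 φ ψ => exact Prv.andE1 φ ψ
  | andE2 φ ψ => exact Prv.andE2 φ ψ
  | orI1 φ ψ => exact Prv.orI1 φ ψ
  | orI2 φ ψ => exact Prv.orI2 φ ψ
  | orE φ ψ χ => exact Prv.orE φ ψ χ
  | botE φ => exact Prv.botE φ
  | topI => exact Prv.topI
  | nec _ ih => exact Prv.nec ih
  | tr φ ψ χ => exact Prv.tr φ ψ χ

/-- iA⁻ + L⊰ ⊢ 4⊰. -/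
theorem four_of_larr (φ : Fm) : Prv (AxU KAx LarrAx) (φ.arr (Fm.box φ)) := by
  set ψ : Fm := φ.and (Fm.box φ) with hψ
  -- ψ ⊰ φ
  have s2 : Prv (AxU KAx LarrAx) (ψ.arr φ) := Prv.nec (Prv.andE1 φ (Fm.box φ))
  -- □ψ → □φ
  have s4 : Prv (AxU KAx LarrAx) ((Fm.box ψ).imp (Fm.box φ)) :=
    pMp2 (Prv.tr Fm.top ψ φ) s2
  -- φ → (□ψ → ψ)
  have s6 : Prv (AxU KAx LarrAx) (φ.imp ((Fm.box ψ).imp ψ)) :=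
    pTrans (Prv.andI φ (Fm.box φ))
      (Prv.mp (pFlip (pComp (Fm.box ψ) (Fm.box φ) ψ)) s4)
  -- L⊰ instance: (□ψ→ψ) ⊰ ψ
  have s8 : Prv (AxU KAx LarrAx) (((Fm.box ψ).imp ψ).arr ψ) :=
    Prv.ax (Or.inr ⟨ψ, rfl⟩)
  have s9 : Prv (AxU KAx LarrAx) (φ.arr ψ) := arrTrans (Prv.nec s6) s8
  exact arrMonoR (Prv.andE2 φ (Fm.box φ)) s9

/-- iA⁻ + L□ + 4⊰ ⊢ L⊰. -/
theorem larr_of_lbox_four (φ : Fm) :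
    Prv (AxU KAx (AxU LboxAx FourAx)) (((Fm.box φ).imp φ).arr φ) := by
  set A : Fm := (Fm.box φ).imp φ with hA
  have t1 : Prv (AxU KAx (AxU LboxAx FourAx)) (A.arr (Fm.box A)) :=
    Prv.ax (Or.inr (Or.inr ⟨A, rfl⟩))
  have t2 : Prv (AxU KAx (AxU LboxAx FourAx)) ((Fm.box A).imp (Fm.box φ)) :=
    Prv.ax (Or.inr (Or.inl ⟨φ, rfl⟩))
  have t3 : Prv (AxU KAx (AxU LboxAx FourAx)) (A.arr (Fm.box φ)) := arrMonoR t2 t1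
  have t4 : Prv (AxU KAx (AxU LboxAx FourAx)) (A.arr A) := Prv.nec (pId A)
  have tk : Prv (AxU KAx (AxU LboxAx FourAx))
      ((A.arr (Fm.box φ)).imp ((A.arr A).imp (A.arr ((Fm.box φ).and A)))) :=
    Prv.ax (Or.inl ⟨A, Fm.box φ, A, rfl⟩)
  have t5 : Prv (AxU KAx (AxU LboxAx FourAx)) (A.arr ((Fm.box φ).and A)) :=
    Prv.mp (Prv.mp tk t3) t4
  have t6 : Prv (AxU KAx (AxU LboxAx FourAx)) (((Fm.box φ).and A).imp φ) :=
    Prv.mp (Prv.mp (Prv.impS ((Fm.box φ).and A) (Fm.box φ) φ)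
      (Prv.andE2 (Fm.box φ) A)) (Prv.andE1 (Fm.box φ) A)
  exact arrMonoR t6 t5

end Aux

/-- iA⁻ + L⊰ derives 4⊰ ; iA⁻ + L□ + 4⊰ derives L⊰ ; hence the two systems coincide. -/
theorem stmt9 :
    (∀ φ : Fm, Prv (AxU KAx LarrAx) (φ.arr (Fm.box φ))) ∧
    (∀ φ : Fm, Prv (AxU KAx (AxU LboxAx FourAx)) (((Fm.box φ).imp φ).arr φ)) ∧
    (∀ f : Fm, Prv (AxU KAx LarrAx) f ↔ Prv (AxU KAx (AxU LboxAx FourAx)) f) := by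
  refine ⟨four_of_larr, larr_of_lbox_four, fun f => ⟨?_, ?_⟩⟩
  · refine prv_mono (fun g hg => ?_)
    rcases hg with hk | ⟨φ, rfl⟩
    · exact Prv.ax (Or.inl hk)
    · exact larr_of_lbox_four φ
  · refine prv_mono (fun g hg => ?_)
    rcases hg with hk | ⟨φ, rfl⟩ | ⟨φ, rfl⟩
    · exact Prv.ax (Or.inl hk)
    · -- L□ from L⊰: □(□φ→φ) → □φ via Tr with the L⊰ axiom
      exact pMp2 (Prv.tr Fm.top ((Fm.box φ).imp φ) φ)
        (Prv.ax (Or.inr ⟨φ, rfl⟩))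
    · exact four_of_larr φ
end

section
/- Over iA₀⁻, the axioms W⊰: ((φ∧□ψ)⊰ψ)→(φ⊰ψ) and W'⊰: (φ⊰ψ)→((□ψ→φ)⊰ψ) are interderivable. -/
/-- Composition of implications. -/
theorem Prv.comp_s10 {Ax : Fm → Prop} {a b c : Fm}
    (h1 : Prv Ax (a.imp b)) (h2 : Prv Ax (b.imp c)) : Prv Ax (a.imp c) :=
  Prv.mp (Prv.mp (Prv.impS a b c) (Prv.mp (Prv.impK (b.imp c) a) h2)) h1

/-- Over iA₀⁻, W⊰ and W'⊰ are interderivable. -/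
theorem stmt10 :
    (∀ φ ψ : Fm, Prv (AxU KAx WpAx) (((φ.and (Fm.box ψ)).arr ψ).imp (φ.arr ψ))) ∧
    (∀ φ ψ : Fm, Prv (AxU KAx WAx) ((φ.arr ψ).imp (((Fm.box ψ).imp φ).arr ψ))) := by
  constructor
  · intro φ ψ
    set B := Fm.box ψ with hB
    set X := φ.and B with hX
    have wprime : Prv (AxU KAx WpAx) ((X.arr ψ).imp ((B.imp X).arr ψ)) :=
      Prv.ax (Or.inr ⟨X, ψ, rfl⟩)
    have t1 : Prv (AxU KAx WpAx) (φ.arr (B.imp X)) := Prv.nec (Prv.andI φ B)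
    have t2 : Prv (AxU KAx WpAx) (((B.imp X).arr ψ).imp (φ.arr ψ)) :=
      Prv.mp (Prv.tr φ (B.imp X) ψ) t1
    exact Prv.comp_s10 wprime t2
  · intro φ ψ
    set B := Fm.box ψ with hB
    set A := B.imp φ with hA
    set X := A.and B with hX
    have taut : Prv (AxU KAx WAx) (X.imp φ) :=
      Prv.mp (Prv.mp (Prv.impS X B φ) (Prv.andE1 A B)) (Prv.andE2 A B)
    have t1 : Prv (AxU KAx WAx) (X.arr φ) := Prv.nec taut
    have t2 : Prv (AxU KAx WAx) ((φ.arr ψ).imp (X.arr ψ)) :=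
      Prv.mp (Prv.tr X φ ψ) t1
    have w : Prv (AxU KAx WAx) ((X.arr ψ).imp (A.arr ψ)) :=
      Prv.ax (Or.inr ⟨A, ψ, rfl⟩)
    exact Prv.comp_s10 t2 w
end

section
/- The system iGW⁻ (iA⁻ plus the axiom W⊰: ((φ∧□ψ)⊰ψ)→(φ⊰ψ)) derives the Löb axiom L⊰: (□φ→φ)⊰φ. -/
/-- iGW⁻ = iA⁻ + W⊰ derives L⊰ : (□φ→φ)⊰φ. -/
theorem stmt11 :
    ∀ φ : Fm, Prv (AxU KAx WAx) (((Fm.box φ).imp φ).arr φ) := by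
  intro φ
  set A := (Fm.box φ).imp φ with hA
  have w : Prv (AxU KAx WAx) (((A.and (Fm.box φ)).arr φ).imp (A.arr φ)) :=
    Prv.ax (Or.inr ⟨A, φ, rfl⟩)
  have h1 : Prv (AxU KAx WAx) ((A.and (Fm.box φ)).imp φ) :=
    Prv.mp (Prv.mp (Prv.impS (A.and (Fm.box φ)) (Fm.box φ) φ)
      (Prv.andE1 A (Fm.box φ))) (Prv.andE2 A (Fm.box φ))
  exact Prv.mp w (Prv.nec h1)
end

section
/- The system iGL⁻ (iA⁻ plus L⊰: (□φ→φ)⊰φ) extended with the persistence axiom P⊰: (φ⊰ψ)→□(φ⊰ψ) derives W⊰: ((φ∧□ψ)⊰ψ)→(φ⊰ψ). -/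
namespace Stmt13Aux

abbrev Ax : Fm → Prop := AxU KAx (AxU LarrAx PAx)

lemma kax (φ ψ χ : Fm) : Prv Ax ((φ.arr ψ).imp ((φ.arr χ).imp (φ.arr (ψ.and χ)))) :=
  .ax (Or.inl ⟨φ, ψ, χ, rfl⟩)

lemma lax (φ : Fm) : Prv Ax (((Fm.box φ).imp φ).arr φ) :=
  .ax (Or.inr (Or.inl ⟨φ, rfl⟩))

lemma pax (φ ψ : Fm) : Prv Ax ((φ.arr ψ).imp (Fm.box (φ.arr ψ))) :=
  .ax (Or.inr (Or.inr ⟨φ, ψ, rfl⟩))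

variable {a b c : Fm}

lemma wk (a : Fm) (h : Prv Ax b) : Prv Ax (a.imp b) := .mp (.impK b a) h

lemma ap (f : Prv Ax (a.imp (b.imp c))) (g : Prv Ax (a.imp b)) : Prv Ax (a.imp c) :=
  .mp (.mp (.impS a b c) f) g

lemma pid (a : Fm) : Prv Ax (a.imp a) :=
  ap (.impK a (a.imp a)) (.impK a a)

lemma trans (f : Prv Ax (a.imp b)) (g : Prv Ax (b.imp c)) : Prv Ax (a.imp c) :=
  ap (wk a g) f

lemma swap (f : Prv Ax (a.imp (b.imp c))) : Prv Ax (b.imp (a.imp c)) :=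
  trans (.impK b a) (.mp (.impS a b c) f)

lemma mpR (f : Prv Ax (a.imp (b.imp c))) (g : Prv Ax b) : Prv Ax (a.imp c) :=
  ap f (wk a g)

/-- compose the innermost result: from a→(b→c) and c→d get a→(b→d). -/
lemma compR {d : Fm} (f : Prv Ax (a.imp (b.imp c))) (g : Prv Ax (c.imp d)) :
    Prv Ax (a.imp (b.imp d)) :=
  trans f (.mp (.impS b c d) (wk b g))

/-- 4⊰ : φ ⊰ □φ, derivable in iGL⁻. -/
lemma four (φ : Fm) : Prv Ax (φ.arr (Fm.box φ)) := by
  set σ := φ.and (Fm.box φ) with hσ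
  have s1 : Prv Ax (σ.arr φ) := .nec (.andE1 _ _)
  have s2 : Prv Ax ((Fm.box σ).imp (Fm.box φ)) := mpR (.tr Fm.top σ φ) s1
  have u1 : Prv Ax (φ.imp ((Fm.box φ).imp σ)) := .andI _ _
  have s3 : Prv Ax (φ.imp ((Fm.box σ).imp σ)) := swap (trans s2 (swap u1))
  have s6 : Prv Ax (φ.arr σ) :=
    .mp (.mp (.tr φ ((Fm.box σ).imp σ) σ) (.nec s3)) (lax σ)
  exact .mp (.mp (.tr φ σ (Fm.box φ)) s6) (.nec (.andE2 _ _))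

lemma main (φ ψ : Fm) :
    Prv Ax (((φ.and (Fm.box ψ)).arr ψ).imp (φ.arr ψ)) := by
  set h := (φ.and (Fm.box ψ)).arr ψ with hh
  set β := h.and (Fm.box φ) with hβ
  set τ := Fm.box ψ with hτ
  -- φ ⊰ ⊤
  have t2 : Prv Ax (φ.arr Fm.top) := .nec (wk φ .topI)
  -- h → (φ ⊰ h), using persistence P⊰ and Tr
  have t3 : Prv Ax (h.imp (φ.arr h)) :=
    trans (pax (φ.and (Fm.box ψ)) ψ) (.mp (.tr φ Fm.top h) t2)
  -- h → (φ ⊰ β)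
  have t4 : Prv Ax (h.imp (φ.arr β)) :=
    mpR (trans t3 (kax φ h (Fm.box φ))) (four φ)
  -- pure theorem: β → (□τ → τ)
  have k1 : Prv Ax ((Fm.box φ).imp ((Fm.box τ).imp (Fm.box (φ.and τ)))) :=
    kax Fm.top φ τ
  have k2 : Prv Ax ((Fm.box (φ.and τ)).imp (h.imp (Fm.box ψ))) :=
    .tr Fm.top (φ.and τ) ψ
  have d1 : Prv Ax ((Fm.box φ).imp ((Fm.box τ).imp (h.imp τ))) := compR k1 k2
  have f1 : Prv Ax (β.imp ((Fm.box τ).imp (h.imp τ))) :=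
    trans (.andE2 h (Fm.box φ)) d1
  have g1 : Prv Ax (β.imp ((Fm.box τ).imp h)) :=
    trans (.andE1 h (Fm.box φ)) (.impK h (Fm.box τ))
  have T4 : Prv Ax (β.imp ((Fm.box τ).imp τ)) :=
    ap (trans f1 (.impS (Fm.box τ) h τ)) g1
  -- h → (φ ⊰ (□τ → τ))
  have t5 : Prv Ax (h.imp (φ.arr ((Fm.box τ).imp τ))) :=
    mpR (trans t4 (.tr φ β ((Fm.box τ).imp τ))) (.nec T4)
  -- h → (φ ⊰ τ), via L⊰
  have t6 : Prv Ax (h.imp (φ.arr τ)) :=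
    mpR (trans t5 (.tr φ ((Fm.box τ).imp τ) τ)) (lax τ)
  -- h → (φ ⊰ (φ ∧ □ψ))
  have t7 : Prv Ax (h.imp (φ.arr (φ.and (Fm.box ψ)))) :=
    trans t6 (.mp (kax φ φ (Fm.box ψ)) (.nec (pid φ)))
  -- conclude with Tr and the hypothesis h
  have fin : Prv Ax ((φ.arr (φ.and (Fm.box ψ))).imp (h.imp (φ.arr ψ))) :=
    .tr φ (φ.and (Fm.box ψ)) ψ
  exact ap (trans t7 fin) (pid h)

end Stmt13Aux

/-- iGL⁻ + P⊰ derives W⊰ : ((φ∧□ψ)⊰ψ)→(φ⊰ψ). -/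
theorem stmt13 :
    ∀ φ ψ : Fm,
      Prv (AxU KAx (AxU LarrAx PAx)) (((φ.and (Fm.box ψ)).arr ψ).imp (φ.arr ψ)) := by
  exact Stmt13Aux.main
end

section
/- The system iA (iA⁻ plus Di) extended with 4⊰: φ⊰□φ derives Leivant's principle Lei: □(φ∨ψ)→□(φ∨□ψ). -/
/-- iA + 4⊰ derives Leivant's principle Lei : □(φ∨ψ)→□(φ∨□ψ). -/
theorem stmt14 :
    ∀ φ ψ : Fm,
      Prv (AxU (AxU KAx DiAx) FourAx)
        ((Fm.box (φ.or ψ)).imp (Fm.box (φ.or (Fm.box ψ)))) := by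
  intro φ ψ
  set A := AxU (AxU KAx DiAx) FourAx
  -- ψ ⊰ □ψ
  have h4 : Prv A (ψ.arr (Fm.box ψ)) := Prv.ax (Or.inr ⟨ψ, rfl⟩)
  -- □ψ ⊰ (φ ∨ □ψ)
  have h2 : Prv A ((Fm.box ψ).arr (φ.or (Fm.box ψ))) := Prv.nec (Prv.orI2 _ _)
  -- ψ ⊰ (φ ∨ □ψ)
  have h3 : Prv A (ψ.arr (φ.or (Fm.box ψ))) := Prv.mp (Prv.mp (Prv.tr _ _ _) h4) h2
  -- φ ⊰ (φ ∨ □ψ)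
  have h1 : Prv A (φ.arr (φ.or (Fm.box ψ))) := Prv.nec (Prv.orI1 _ _)
  -- (φ ∨ ψ) ⊰ (φ ∨ □ψ)
  have hdi : Prv A ((φ.or ψ).arr (φ.or (Fm.box ψ))) :=
    Prv.mp (Prv.mp (Prv.ax (Or.inl (Or.inr ⟨φ, ψ, _, rfl⟩))) h1) h3
  -- goal: (⊤⊰(φ∨ψ)) → (⊤⊰(φ∨□ψ))
  exact Prv.mp (Prv.mp (Prv.impS _ _ _) (Prv.tr _ _ _)) (Prv.mp (Prv.impK _ _) hdi)
end

section
/- The system mHC⊰ = iA⁻ + S□ (φ→□φ) + CB⊰ ((φ⊰ψ)→((φ→ψ)∨φ)) derives the Box axiom (φ⊰ψ)→□(φ→ψ), and also derives the Montagna axiom M⊰: (φ⊰ψ)→((□χ→φ)⊰(□χ→ψ)). -/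
namespace Aux

/-- identity: ⊢ φ→φ -/
theorem Prv.id' {Ax : Fm → Prop} (φ : Fm) : Prv Ax (φ.imp φ) :=
  Prv.mp (Prv.mp (Prv.impS φ (φ.imp φ) φ) (Prv.impK φ (φ.imp φ))) (Prv.impK φ φ)

/-- ⊢ α→⊤ -/
theorem Prv.toTop {Ax : Fm → Prop} (α : Fm) : Prv Ax (α.imp Fm.top) :=
  Prv.mp (Prv.impK Fm.top α) Prv.topI

/-- Derivations from a set of hypotheses (nec only on genuine theorems). -/
inductive D (Ax Γ : Fm → Prop) : Fm → Prop
  | hyp {φ : Fm} : Γ φ → D Ax Γ φ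
  | thm {φ : Fm} : Prv Ax φ → D Ax Γ φ
  | mp {φ ψ : Fm} : D Ax Γ (φ.imp ψ) → D Ax Γ φ → D Ax Γ ψ

def ins (φ : Fm) (Γ : Fm → Prop) : Fm → Prop := fun x => x = φ ∨ Γ x

def emp : Fm → Prop := fun _ => False

theorem ded {Ax Γ : Fm → Prop} {φ ψ : Fm} (h : D Ax (ins φ Γ) ψ) :
    D Ax Γ (φ.imp ψ) := by
  induction h with
  | hyp h =>
    rcases h with rfl | h
    · exact D.thm (Prv.id' _)
    · exact D.mp (D.thm (Prv.impK _ φ)) (D.hyp h)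
  | thm p => exact D.mp (D.thm (Prv.impK _ φ)) (D.thm p)
  | mp _ _ ih1 ih2 => exact D.mp (D.mp (D.thm (Prv.impS φ _ _)) ih1) ih2

theorem toPrv {Ax : Fm → Prop} {φ : Fm} (h : D Ax emp φ) : Prv Ax φ := by
  induction h with
  | hyp h => exact h.elim
  | thm p => exact p
  | mp _ _ ih1 ih2 => exact Prv.mp ih1 ih2

/-- case split on a disjunction -/
theorem D.cases {Ax Γ : Fm → Prop} {α β χ : Fm} (h : D Ax Γ (α.or β))
    (ha : D Ax (ins α Γ) χ) (hb : D Ax (ins β Γ) χ) : D Ax Γ χ :=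
  D.mp (D.mp (D.mp (D.thm (Prv.orE α β χ)) (ded ha)) (ded hb)) h

abbrev Ax0 : Fm → Prop := AxU KAx (AxU SboxAx CBAx)

theorem kAx (φ ψ χ : Fm) :
    Prv Ax0 ((φ.arr ψ).imp ((φ.arr χ).imp (φ.arr (ψ.and χ)))) :=
  Prv.ax (Or.inl ⟨φ, ψ, χ, rfl⟩)

theorem sboxAx (φ : Fm) : Prv Ax0 (φ.imp (Fm.box φ)) :=
  Prv.ax (Or.inr (Or.inl ⟨φ, rfl⟩))

theorem cbAx (φ ψ : Fm) : Prv Ax0 ((φ.arr ψ).imp ((φ.imp ψ).or φ)) :=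
  Prv.ax (Or.inr (Or.inr ⟨φ, ψ, rfl⟩))

/-- Box : (φ⊰ψ)→□(φ→ψ) in mHC⊰. -/
theorem boxThm (φ ψ : Fm) : Prv Ax0 ((φ.arr ψ).imp (Fm.box (φ.imp ψ))) := by
  apply toPrv; apply ded
  -- context: φ⊰ψ
  have harr : D Ax0 (ins (φ.arr ψ) emp) (φ.arr ψ) := D.hyp (Or.inl rfl)
  have hcb : D Ax0 (ins (φ.arr ψ) emp) ((φ.imp ψ).or φ) :=
    D.mp (D.thm (cbAx φ ψ)) harr
  refine D.cases hcb ?_ ?_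
  · -- case φ→ψ : use S□ on φ→ψ
    exact D.mp (D.thm (sboxAx (φ.imp ψ))) (D.hyp (Or.inl rfl))
  · -- case φ : □φ by S□, then Tr with φ⊰ψ gives □ψ, then Tr with ψ⊰(φ→ψ)
    have hboxφ : D Ax0 (ins φ (ins (φ.arr ψ) emp)) (Fm.top.arr φ) :=
      D.mp (D.thm (sboxAx φ)) (D.hyp (Or.inl rfl))
    have harr' : D Ax0 (ins φ (ins (φ.arr ψ) emp)) (φ.arr ψ) :=
      D.hyp (Or.inr (Or.inl rfl))
    have hboxψ : D Ax0 (ins φ (ins (φ.arr ψ) emp)) (Fm.top.arr ψ) :=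
      D.mp (D.mp (D.thm (Prv.tr Fm.top φ ψ)) hboxφ) harr'
    have hψimp : Prv Ax0 (ψ.arr (φ.imp ψ)) := Prv.nec (Prv.impK ψ φ)
    exact D.mp (D.mp (D.thm (Prv.tr Fm.top ψ (φ.imp ψ))) hboxψ) (D.thm hψimp)

/-- IPC lemma: ((φ→ψ)∧(χ'→φ))→(χ'→ψ). -/
theorem ipcLem (φ ψ χ' : Fm) :
    Prv Ax0 (((φ.imp ψ).and (χ'.imp φ)).imp (χ'.imp ψ)) := by
  apply toPrv; apply ded; apply ded
  set Γ := ins χ' (ins ((φ.imp ψ).and (χ'.imp φ)) emp)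
  have hc : D Ax0 Γ ((φ.imp ψ).and (χ'.imp φ)) := D.hyp (Or.inr (Or.inl rfl))
  have hχ : D Ax0 Γ χ' := D.hyp (Or.inl rfl)
  have h1 : D Ax0 Γ (φ.imp ψ) := D.mp (D.thm (Prv.andE1 _ _)) hc
  have h2 : D Ax0 Γ (χ'.imp φ) := D.mp (D.thm (Prv.andE2 _ _)) hc
  exact D.mp h1 (D.mp h2 hχ)

/-- M⊰ : (φ⊰ψ)→((□χ→φ)⊰(□χ→ψ)) in mHC⊰. -/
theorem mThm (φ ψ χ : Fm) :
    Prv Ax0 ((φ.arr ψ).imp (((Fm.box χ).imp φ).arr ((Fm.box χ).imp ψ))) := by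
  apply toPrv; apply ded
  set α := (Fm.box χ).imp φ
  have harr : D Ax0 (ins (φ.arr ψ) emp) (φ.arr ψ) := D.hyp (Or.inl rfl)
  -- □(φ→ψ) from Box
  have hb : D Ax0 (ins (φ.arr ψ) emp) (Fm.top.arr (φ.imp ψ)) :=
    D.mp (D.thm (boxThm φ ψ)) harr
  -- α ⊰ ⊤
  have ht : D Ax0 (ins (φ.arr ψ) emp) (α.arr Fm.top) :=
    D.thm (Prv.nec (Prv.toTop α))
  -- α ⊰ (φ→ψ)
  have h1 : D Ax0 (ins (φ.arr ψ) emp) (α.arr (φ.imp ψ)) :=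
    D.mp (D.mp (D.thm (Prv.tr α Fm.top (φ.imp ψ))) ht) hb
  -- α ⊰ α
  have h2 : D Ax0 (ins (φ.arr ψ) emp) (α.arr α) := D.thm (Prv.nec (Prv.id' α))
  -- α ⊰ ((φ→ψ)∧α) by K⊰
  have h3 : D Ax0 (ins (φ.arr ψ) emp) (α.arr ((φ.imp ψ).and α)) :=
    D.mp (D.mp (D.thm (kAx α (φ.imp ψ) α)) h1) h2
  -- ((φ→ψ)∧α) ⊰ (□χ→ψ)
  have h4 : Prv Ax0 (((φ.imp ψ).and α).arr ((Fm.box χ).imp ψ)) :=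
    Prv.nec (ipcLem φ ψ (Fm.box χ))
  exact D.mp (D.mp (D.thm (Prv.tr α ((φ.imp ψ).and α) ((Fm.box χ).imp ψ))) h3)
    (D.thm h4)

end Aux

/-- mHC⊰ = iA⁻ + S□ + CB⊰ derives Box and the Montagna axiom M⊰. -/
theorem stmt15 :
    (∀ φ ψ : Fm, Prv (AxU KAx (AxU SboxAx CBAx)) ((φ.arr ψ).imp (Fm.box (φ.imp ψ)))) ∧
    (∀ φ ψ χ : Fm,
      Prv (AxU KAx (AxU SboxAx CBAx))
        ((φ.arr ψ).imp (((Fm.box χ).imp φ).arr ((Fm.box χ).imp ψ)))) := by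
  exact ⟨Aux.boxThm, Aux.mThm⟩
end

section
/- In the system PLAA⁻ = iA⁻ + S□ (φ→□φ) + C4⊰ (□φ⊰φ), the formula φ⊰ψ is provably equivalent to φ→□ψ, and consequently PLAA⁻ derives the axioms App⊰: (φ∧(φ⊰ψ))⊰ψ, Hug: (φ→□ψ)→(φ⊰ψ), and Di: (φ⊰χ)→(ψ⊰χ)→((φ∨ψ)⊰χ). -/
/-- Provability from a list of hypotheses: theorems, hypotheses, modus ponens. -/
inductive PrvH (Ax : Fm → Prop) : List Fm → Fm → Prop
  | base {Γ φ} : Prv Ax φ → PrvH Ax Γ φ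
  | hyp {Γ φ} : φ ∈ Γ → PrvH Ax Γ φ
  | mp {Γ φ ψ} : PrvH Ax Γ (φ.imp ψ) → PrvH Ax Γ φ → PrvH Ax Γ ψ

theorem Prv.idem {Ax : Fm → Prop} (φ : Fm) : Prv Ax (φ.imp φ) :=
  Prv.mp (Prv.mp (Prv.impS φ (φ.imp φ) φ) (Prv.impK φ (φ.imp φ))) (Prv.impK φ φ)

theorem ded {Ax : Fm → Prop} {Γ : List Fm} {φ ψ : Fm}
    (h : PrvH Ax (φ :: Γ) ψ) : PrvH Ax Γ (φ.imp ψ) := by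
  induction h with
  | base h => exact PrvH.mp (PrvH.base (Prv.impK _ _)) (PrvH.base h)
  | hyp h =>
    rcases List.mem_cons.1 h with h | h
    · subst h; exact PrvH.base (Prv.idem _)
    · exact PrvH.mp (PrvH.base (Prv.impK _ _)) (PrvH.hyp h)
  | mp _ _ ih1 ih2 => exact PrvH.mp (PrvH.mp (PrvH.base (Prv.impS _ _ _)) ih1) ih2

theorem PrvH.toPrv {Ax : Fm → Prop} {φ : Fm} (h : PrvH Ax [] φ) : Prv Ax φ := by
  induction h with
  | base h => exact h
  | hyp h => simp at h
  | mp _ _ ih1 ih2 => exact Prv.mp ih1 ih2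

abbrev PLAA : Fm → Prop := AxU KAx (AxU SboxAx C4Ax)

theorem plaa_K (φ ψ χ : Fm) : Prv PLAA ((φ.arr ψ).imp ((φ.arr χ).imp (φ.arr (ψ.and χ)))) :=
  Prv.ax (Or.inl ⟨φ, ψ, χ, rfl⟩)

theorem plaa_S (φ : Fm) : Prv PLAA (φ.imp (Fm.box φ)) :=
  Prv.ax (Or.inr (Or.inl ⟨φ, rfl⟩))

theorem plaa_C4 (φ : Fm) : Prv PLAA ((Fm.box φ).arr φ) :=
  Prv.ax (Or.inr (Or.inr ⟨φ, rfl⟩))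

theorem plaa_goal1 (φ ψ : Fm) : Prv PLAA ((φ.arr ψ).imp (φ.imp (Fm.box ψ))) := by
  apply PrvH.toPrv (ded (ded ?_))
  have hφ : PrvH PLAA [φ, φ.arr ψ] φ := PrvH.hyp (by simp)
  have harr : PrvH PLAA [φ, φ.arr ψ] (φ.arr ψ) := PrvH.hyp (by simp)
  have hbox : PrvH PLAA [φ, φ.arr ψ] (Fm.box φ) :=
    PrvH.mp (PrvH.base (plaa_S φ)) hφ
  exact PrvH.mp (PrvH.mp (PrvH.base (Prv.tr Fm.top φ ψ)) hbox) harr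

theorem plaa_goal2 (φ ψ : Fm) : Prv PLAA ((φ.imp (Fm.box ψ)).imp (φ.arr ψ)) := by
  set X := φ.imp (Fm.box ψ) with hX
  apply PrvH.toPrv (ded ?_)
  have hXh : PrvH PLAA [X] X := PrvH.hyp (by simp)
  have hboxX : PrvH PLAA [X] (Fm.box X) := PrvH.mp (PrvH.base (plaa_S X)) hXh
  have htop : Prv PLAA (φ.arr Fm.top) :=
    Prv.nec (Prv.mp (Prv.impK Fm.top φ) Prv.topI)
  have h1 : PrvH PLAA [X] (φ.arr X) :=
    PrvH.mp (PrvH.mp (PrvH.base (Prv.tr φ Fm.top X)) (PrvH.base htop)) hboxX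
  have hid : Prv PLAA (φ.arr φ) := Prv.nec (Prv.idem φ)
  have h2 : PrvH PLAA [X] (φ.arr (φ.and X)) :=
    PrvH.mp (PrvH.mp (PrvH.base (plaa_K φ φ X)) (PrvH.base hid)) h1
  -- (φ ∧ X) → □ψ
  have h3 : Prv PLAA ((φ.and X).imp (Fm.box ψ)) := by
    apply PrvH.toPrv (ded ?_)
    have hc : PrvH PLAA [φ.and X] (φ.and X) := PrvH.hyp (by simp)
    have hφ : PrvH PLAA [φ.and X] φ := PrvH.mp (PrvH.base (Prv.andE1 _ _)) hc
    have hXc : PrvH PLAA [φ.and X] X := PrvH.mp (PrvH.base (Prv.andE2 _ _)) hc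
    exact PrvH.mp hXc hφ
  have h4 : Prv PLAA ((φ.and X).arr (Fm.box ψ)) := Prv.nec h3
  have h5 : Prv PLAA ((φ.and X).arr ψ) :=
    Prv.mp (Prv.mp (Prv.tr (φ.and X) (Fm.box ψ) ψ) h4) (plaa_C4 ψ)
  exact PrvH.mp (PrvH.mp (PrvH.base (Prv.tr φ (φ.and X) ψ)) h2) (PrvH.base h5)

/-- In PLAA⁻ = iA⁻ + S□ + C4⊰, φ⊰ψ is equivalent to φ→□ψ, and App⊰, Hug and Di are derivable. -/
theorem stmt16 :
    (∀ φ ψ : Fm, Prv (AxU KAx (AxU SboxAx C4Ax)) ((φ.arr ψ).imp (φ.imp (Fm.box ψ)))) ∧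
    (∀ φ ψ : Fm, Prv (AxU KAx (AxU SboxAx C4Ax)) ((φ.imp (Fm.box ψ)).imp (φ.arr ψ))) ∧
    (∀ φ ψ : Fm, Prv (AxU KAx (AxU SboxAx C4Ax)) ((φ.and (φ.arr ψ)).arr ψ)) ∧
    (∀ φ ψ χ : Fm,
      Prv (AxU KAx (AxU SboxAx C4Ax)) ((φ.arr χ).imp ((ψ.arr χ).imp ((φ.or ψ).arr χ)))) := by
  refine ⟨plaa_goal1, plaa_goal2, ?_, ?_⟩
  · intro φ ψ
    have h3 : Prv PLAA ((φ.and (φ.arr ψ)).imp (Fm.box ψ)) := by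
      apply PrvH.toPrv (ded ?_)
      set Γ : List Fm := [φ.and (φ.arr ψ)]
      have hc : PrvH PLAA Γ (φ.and (φ.arr ψ)) := PrvH.hyp (by simp [Γ])
      have hφ : PrvH PLAA Γ φ := PrvH.mp (PrvH.base (Prv.andE1 _ _)) hc
      have harr : PrvH PLAA Γ (φ.arr ψ) := PrvH.mp (PrvH.base (Prv.andE2 _ _)) hc
      exact PrvH.mp (PrvH.mp (PrvH.base (plaa_goal1 φ ψ)) harr) hφ
    have h4 := Prv.nec h3
    exact Prv.mp (Prv.mp (Prv.tr _ (Fm.box ψ) ψ) h4) (plaa_C4 ψ)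
  · intro φ ψ χ
    apply PrvH.toPrv (ded (ded ?_))
    set Γ : List Fm := [ψ.arr χ, φ.arr χ]
    have h1 : PrvH PLAA Γ (φ.arr χ) := PrvH.hyp (by simp [Γ])
    have h2 : PrvH PLAA Γ (ψ.arr χ) := PrvH.hyp (by simp [Γ])
    have h1' : PrvH PLAA Γ (φ.imp (Fm.box χ)) :=
      PrvH.mp (PrvH.base (plaa_goal1 φ χ)) h1
    have h2' : PrvH PLAA Γ (ψ.imp (Fm.box χ)) :=
      PrvH.mp (PrvH.base (plaa_goal1 ψ χ)) h2
    have h3 : PrvH PLAA Γ ((φ.or ψ).imp (Fm.box χ)) :=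
      PrvH.mp (PrvH.mp (PrvH.base (Prv.orE φ ψ (Fm.box χ))) h1') h2'
    exact PrvH.mp (PrvH.base (plaa_goal2 (φ.or ψ) χ)) h3
end

section
/- For a preframe (W, ⪯, ⊏) with ⪯ a partial order, the following are equivalent: (i) for all ⪯-upward-closed sets U, V, the set U⊰V := {k ∈ W : for all ℓ with k⊏ℓ, if ℓ∈U then ℓ∈V} is ⪯-upward closed; (ii) the condition ⊰-p holds: whenever k ⪯ ℓ ⊏ m, then k ⊏ m. -/
/-- A set is upward closed with respect to a relation `le`. -/
def UpClosed {W : Type*} (le : W → W → Prop) (X : Set W) : Prop :=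
  ∀ ⦃x y : W⦄, x ∈ X → le x y → y ∈ X

/-- The set U ⊰ V := {k | ∀ ℓ, k ⊏ ℓ → ℓ ∈ U → ℓ ∈ V}. -/
def arrSet {W : Type*} (sub : W → W → Prop) (U V : Set W) : Set W :=
  {k : W | ∀ l : W, sub k l → l ∈ U → l ∈ V}

/-- For a preframe (W, ⪯, ⊏) with ⪯ a partial order: the set U ⊰ V is
⪯-upward closed for all ⪯-upward closed U, V iff the condition ⊰-p holds:
k ⪯ ℓ ⊏ m implies k ⊏ m. -/
theorem stmt17 {W : Type*} (le : W → W → Prop) (sub : W → W → Prop)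
    (hrefl : ∀ x, le x x)
    (htrans : ∀ ⦃x y z⦄, le x y → le y z → le x z)
    (hantisymm : ∀ ⦃x y⦄, le x y → le y x → x = y) :
    (∀ U V : Set W, UpClosed le U → UpClosed le V → UpClosed le (arrSet sub U V)) ↔
    (∀ k l m : W, le k l → sub l m → sub k m) := by
  constructor
  · intro h k l m hkl hlm
    by_contra hkm
    have hU : UpClosed le {x | le m x} := fun x y hx hxy => htrans hx hxy
    have hV : UpClosed le {x | le m x ∧ x ≠ m} := by
      intro x y hx hxy
      refine ⟨htrans hx.1 hxy, fun hy => hx.2 (hantisymm (hy ▸ hxy) hx.1)⟩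
    have hk : k ∈ arrSet sub {x | le m x} {x | le m x ∧ x ≠ m} := by
      intro l' hl' hmem
      refine ⟨hmem, fun he => hkm (he ▸ hl')⟩
    have hl := h _ _ hU hV hk hkl
    exact (hl m hlm (hrefl m)).2 rfl
  · intro h U V _ _ k l hk hkl m hlm hmU
    exact hk m (h k l m hkl hlm) hmU
end

section
/- Let (W, ⪯, ⊏) be a ⊰-frame (a preframe satisfying: k ⪯ ℓ ⊏ m implies k ⊏ m), with the Kripke forcing relation defined standardly for intuitionistic connectives and k ⊩ φ⊰ψ iff for all ℓ with k⊏ℓ, ℓ⊩φ implies ℓ⊩ψ. Then the following are equivalent: (i) every valuation validates the scheme ((φ∧ψ)⊰χ)→(φ⊰(ψ→χ)) at every point; (ii) every valuation validates (ψ⊰χ)→(⊤⊰(ψ→χ)) at every point; (iii) the frame is brilliant: k ⊏ ℓ ⪯ m implies k ⊏ m. -/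
/-- A ⊰-frame: a partially ordered set (W, ⪯) with a binary relation ⊏
satisfying the persistence condition ⊰-p : k ⪯ ℓ ⊏ m implies k ⊏ m. -/
structure SFrame where
  W : Type
  le : W → W → Prop
  le_refl : ∀ x, le x x
  le_trans : ∀ ⦃x y z⦄, le x y → le y z → le x z
  le_antisymm : ∀ ⦃x y⦄, le x y → le y x → x = y
  sub : W → W → Prop
  persist : ∀ ⦃k l m⦄, le k l → sub l m → sub k m

/-- A valuation is admissible if each variable denotes a ⪯-upward closed set. -/
def SFrame.UpVal (F : SFrame) (V : Nat → F.W → Prop) : Prop :=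
  ∀ (n : Nat) ⦃x y : F.W⦄, V n x → F.le x y → V n y

/-- Kripke forcing: intuitionistic clauses for the IPC connectives, and
k ⊩ φ⊰ψ iff for all ℓ with k ⊏ ℓ, ℓ ⊩ φ implies ℓ ⊩ ψ. -/
def SFrame.Force (F : SFrame) (V : Nat → F.W → Prop) : Fm → F.W → Prop
  | Fm.bot => fun _ => False
  | Fm.top => fun _ => True
  | Fm.var n => V n
  | Fm.and φ ψ => fun k => F.Force V φ k ∧ F.Force V ψ k
  | Fm.or φ ψ => fun k => F.Force V φ k ∨ F.Force V ψ k
  | Fm.imp φ ψ => fun k => ∀ l, F.le k l → F.Force V φ l → F.Force V ψ l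
  | Fm.arr φ ψ => fun k => ∀ l, F.sub k l → F.Force V φ l → F.Force V ψ l

theorem SFrame.force_mono (F : SFrame) {V : Nat → F.W → Prop} (hV : F.UpVal V) :
    ∀ (φ : Fm) ⦃x y : F.W⦄, F.le x y → F.Force V φ x → F.Force V φ y := by
  intro φ
  induction φ with
  | bot => intro x y _ h; exact h.elim
  | top => intro x y _ _; trivial
  | var n => intro x y hxy h; exact hV n h hxy
  | and φ ψ ihφ ihψ => intro x y hxy h; exact ⟨ihφ hxy h.1, ihψ hxy h.2⟩
  | or φ ψ ihφ ihψ =>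
      intro x y hxy h
      exact h.elim (fun h => Or.inl (ihφ hxy h)) (fun h => Or.inr (ihψ hxy h))
  | imp φ ψ _ _ =>
      intro x y hxy h l hyl hφ
      exact h l (F.le_trans hxy hyl) hφ
  | arr φ ψ _ _ =>
      intro x y hxy h l hyl hφ
      exact h l (F.persist hxy hyl) hφ

theorem brilliant_of_scheme2 (F : SFrame)
    (h : ∀ V, F.UpVal V → ∀ ψ χ : Fm, ∀ k : F.W,
        F.Force V ((ψ.arr χ).imp (Fm.top.arr (ψ.imp χ))) k) :
    ∀ k l m : F.W, F.sub k l → F.le l m → F.sub k m := by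
  intro k l m hkl hlm
  set V : Nat → F.W → Prop := fun n x =>
    if n = 1 then F.le m x
    else if n = 2 then ∃ y, F.le y x ∧ F.le m y ∧ F.sub k y
    else True with hVdef
  have hV : F.UpVal V := by
    intro n x y hx hxy
    by_cases h1 : n = 1
    · simp only [hVdef, h1, if_pos rfl] at hx ⊢
      exact F.le_trans hx hxy
    · by_cases h2 : n = 2
      · simp only [hVdef, h1, h2, if_neg, if_pos rfl, ite_false] at hx ⊢
        obtain ⟨z, hz1, hz2, hz3⟩ := hx
        exact ⟨z, F.le_trans hz1 hxy, hz2, hz3⟩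
      · simp [hVdef, h1, h2]
  have hinst := h V hV (Fm.var 1) (Fm.var 2) k k (F.le_refl k)
  have harr : F.Force V ((Fm.var 1).arr (Fm.var 2)) k := by
    intro n hkn hq
    have hmn : F.le m n := by simpa [SFrame.Force, hVdef] using hq
    show V 2 n
    exact ⟨n, F.le_refl n, hmn, hkn⟩
  have := hinst harr l hkl trivial m hlm (show V 1 m by simp [hVdef, F.le_refl m])
  obtain ⟨y, hym, hmy, hky⟩ := (this : ∃ y, F.le y m ∧ F.le m y ∧ F.sub k y)
  have : y = m := F.le_antisymm hym hmy
  exact this ▸ hky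

theorem scheme_of_brilliant (F : SFrame)
    (hb : ∀ k l m : F.W, F.sub k l → F.le l m → F.sub k m) :
    ∀ V, F.UpVal V → ∀ φ ψ χ : Fm, ∀ k : F.W,
      F.Force V (((φ.and ψ).arr χ).imp (φ.arr (ψ.imp χ))) k := by
  intro V hV φ ψ χ k l _ harr m hlm hφ n hmn hψ
  exact harr n (hb l m n hlm hmn) ⟨F.force_mono hV φ hmn hφ, hψ⟩

/-- For a ⊰-frame F the following are equivalent: (i) validity of
((φ∧ψ)⊰χ)→(φ⊰(ψ→χ)); (ii) validity of (ψ⊰χ)→(⊤⊰(ψ→χ)); (iii) brilliancy: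
k ⊏ ℓ ⪯ m implies k ⊏ m. -/
theorem stmt18 (F : SFrame) :
    ((∀ V, F.UpVal V → ∀ φ ψ χ : Fm, ∀ k : F.W,
        F.Force V (((φ.and ψ).arr χ).imp (φ.arr (ψ.imp χ))) k) ↔
      (∀ k l m : F.W, F.sub k l → F.le l m → F.sub k m)) ∧
    ((∀ V, F.UpVal V → ∀ ψ χ : Fm, ∀ k : F.W,
        F.Force V ((ψ.arr χ).imp (Fm.top.arr (ψ.imp χ))) k) ↔
      (∀ k l m : F.W, F.sub k l → F.le l m → F.sub k m)) := by
  constructor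
  · constructor
    · intro h k l m hkl hlm
      apply brilliant_of_scheme2 F _ k l m hkl hlm
      intro V hV ψ χ j n hjn harr p hnp _ q hpq hψ
      exact h V hV Fm.top ψ χ j n hjn (fun r hnr hr => harr r hnr hr.2) p hnp
        trivial q hpq hψ
    · exact scheme_of_brilliant F
  · constructor
    · exact brilliant_of_scheme2 F
    · intro hb V hV ψ χ k l hkl harr m hlm _ n hmn hψ
      exact harr n (hb l m n hlm hmn) hψ
end
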